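/- arXiv:2106.16197 — 2 statements merged into one kernel-verified Lean document; each statement's English description precedes it below -/
import Mathlib

section
/- Fix an integer k ≥ 1 and let θ = π/2^k. Define the 3×3 real matrices A_a = [[cos θ, −sin θ, 0],[sin θ, cos θ, 0],[1−cos θ−sin θ, 1+sin θ−cos θ, 1]] and A_$ = [[1,0,1/2],[0,1,0],[0,0,1/2]]. Then for every j ≥ 0, the vector v_f(j) = A_$ · (A_a)^{j·2^k} · (1,0,0)ᵀ equals (1,0,0)ᵀ if j is even and equals (0,0,1)ᵀ if j is odd; consequently, with accepting state 1, inputs a^{j·2^k} with j even are accepted with probability 1 and inputs a^{j·2^k} with j odd are accepted with probability 0. (Hence the promise problem MOD2^k, with yes-instances {a^{j·2^k} : j even} and no-instances {a^{j·2^k} : j odd}, is solved by a 3-state affine finite automaton with zero error.) -/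
open Matrix Real

/-- The affine operator applied on each input symbol `a` (rotation by `θ`,
augmented to an affine operator). -/
noncomputable def AaM (θ : ℝ) : Matrix (Fin 3) (Fin 3) ℝ :=
  !![Real.cos θ, -Real.sin θ, 0;
     Real.sin θ, Real.cos θ, 0;
     1 - Real.cos θ - Real.sin θ, 1 + Real.sin θ - Real.cos θ, 1]

/-- The affine operator applied on the right end-marker `$`. -/
noncomputable def AdollarP : Matrix (Fin 3) (Fin 3) ℝ :=
  !![1, 0, 1/2; 0, 1, 0; 0, 0, 1/2]

/-- The final affine state on the input `a^{j·2^k}` (with `θ = π/2^k`). -/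
noncomputable def vfP (k : ℕ) (j : ℕ) : Fin 3 → ℝ :=
  (AdollarP * AaM (Real.pi / 2 ^ k) ^ (j * 2 ^ k)) *ᵥ ![1, 0, 0]

/-- The acceptance probability (accepting state: the first state). -/
noncomputable def probP (k : ℕ) (j : ℕ) : ℝ :=
  |vfP k j 0| / (|vfP k j 0| + |vfP k j 1| + |vfP k j 2|)

/-! `A_a` acts as a rotation by `θ` on the first two coordinates, corrected in the third so that
columns sum to `1`; hence `θ ↦ A_a(θ)` is a homomorphism, and `2^k` steps by `π/2^k` rotate by
`π`. After `j·2^k` letters the state is `(cos jπ, 0, 1 - cos jπ) = ((-1)^j, 0, 1 - (-1)^j)`,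
which `A_$` sends to `(1, 0, 0)` or `(0, 0, 1)` according to the parity of `j`. -/

lemma AaM_zero : AaM 0 = 1 := by
  ext i j
  fin_cases i <;> fin_cases j <;> simp [AaM]

lemma AaM_add (α β : ℝ) : AaM (α + β) = AaM α * AaM β := by
  ext i j
  fin_cases i <;> fin_cases j <;>
    simp [AaM, Matrix.mul_apply, Fin.sum_univ_three, Real.cos_add, Real.sin_add] <;> ring

lemma AaM_pow (α : ℝ) (n : ℕ) : AaM α ^ n = AaM (n * α) := by
  induction n with
  | zero => simp [AaM_zero]
  | succ n ih => rw [pow_succ, ih, ← AaM_add]; push_cast; ring_nf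

lemma AaM_mulVec_single_zero (θ : ℝ) :
    AaM θ *ᵥ ![1, 0, 0] = ![Real.cos θ, Real.sin θ, 1 - Real.cos θ - Real.sin θ] := by
  ext i
  fin_cases i <;> simp [AaM, Matrix.mulVec, dotProduct, Fin.sum_univ_three]

lemma AdollarP_mulVec (x y z : ℝ) : AdollarP *ᵥ ![x, y, z] = ![x + z / 2, y, z / 2] := by
  ext i
  fin_cases i <;> simp [AdollarP, Matrix.mulVec, dotProduct, Fin.sum_univ_three] <;> ring

lemma vfP_eq (k j : ℕ) : vfP k j = ![(1 + (-1) ^ j) / 2, 0, (1 - (-1) ^ j) / 2] := by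
  have hangle : ((j * 2 ^ k : ℕ) : ℝ) * (π / 2 ^ k) = j * π := by
    push_cast
    field_simp
  have hcos : Real.cos (j * π) = (-1) ^ j := by simpa using Real.cos_nat_mul_pi_sub 0 j
  rw [vfP, ← mulVec_mulVec, AaM_pow, hangle, AaM_mulVec_single_zero, Real.sin_nat_mul_pi, hcos,
    AdollarP_mulVec]
  ext i
  fin_cases i <;> simp
  ring

theorem mod2k_solved_with_zero_error_general (k : ℕ) (j : ℕ) :
    (Even j → vfP k j = ![1, 0, 0] ∧ probP k j = 1) ∧
    (Odd j → vfP k j = ![0, 0, 1] ∧ probP k j = 0) := by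
  refine ⟨fun hj => ?_, fun hj => ?_⟩
  · have hvf : vfP k j = ![1, 0, 0] := by
      rw [vfP_eq, hj.neg_one_pow]
      norm_num
    simp [probP, hvf]
  · have hvf : vfP k j = ![0, 0, 1] := by
      rw [vfP_eq, hj.neg_one_pow]
      norm_num
    simp [probP, hvf]

/-- For `k ≥ 1` and `θ = π/2^k`: the final vector `v_f(j) = A_$ · (A_a)^{j·2^k} · (1,0,0)ᵀ`
equals `(1,0,0)ᵀ` if `j` is even and `(0,0,1)ᵀ` if `j` is odd; consequently, inputs
`a^{j·2^k}` with `j` even are accepted with probability `1` and those with `j` odd with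
probability `0`: the promise problem `MOD2^k` is solved by a 3-state AfA with zero error. -/
theorem mod2k_solved_with_zero_error (k : ℕ) (hk : 1 ≤ k) (j : ℕ) :
    (Even j → vfP k j = ![1, 0, 0] ∧ probP k j = 1) ∧
    (Odd j → vfP k j = ![0, 0, 1] ∧ probP k j = 0) :=
  mod2k_solved_with_zero_error_general k j
end

section
/- Let L be a language recognized by an n-state nondeterministic finite automaton N, where n > 1, such that every member of L is accepted by N on exactly one nondeterministic computation path. Then there is an (n+1)-state affine finite automaton that accepts every x ∈ L with probability 1 and every x ∉ L with probability 0; i.e., L is recognized by an (n+1)-state AfA with zero error. -/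
open Matrix

/-- A nondeterministic finite automaton with `n` states over alphabet `α`:
a transition function `δ`, an initial state, and a set of accepting states. -/
structure NFAb (α : Type) (n : ℕ) where
  δ : Fin n → α → Finset (Fin n)
  start : Fin n
  accept : Finset (Fin n)

/-- `q` is a complete nondeterministic computation path of the transition function `δ`
on the input string `x`: `q_r ∈ δ(q_{r−1}, x_r)` for all `1 ≤ r ≤ |x|`. -/
def IsPath {α : Type} {n : ℕ} (δ : Fin n → α → Finset (Fin n))
    (x : List α) (q : Fin (x.length + 1) → Fin n) : Prop :=
  ∀ r : Fin x.length, q r.succ ∈ δ (q r.castSucc) (x.get r)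

/-- The NFA accepts `x` if some computation path on `x` starting at the initial state
ends in an accepting state. -/
def NFAb.Accepts {α : Type} {n : ℕ} (M : NFAb α n) (x : List α) : Prop :=
  ∃ q : Fin (x.length + 1) → Fin n,
    q 0 = M.start ∧ IsPath M.δ x q ∧ q (Fin.last x.length) ∈ M.accept

/-- The number of accepting nondeterministic computation paths of the NFA on `x`. -/
noncomputable def NFAb.accPathCount {α : Type} {n : ℕ} (M : NFAb α n) (x : List α) : ℕ :=
  Nat.card {q : Fin (x.length + 1) → Fin n //
    q 0 = M.start ∧ IsPath M.δ x q ∧ q (Fin.last x.length) ∈ M.accept}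

/-- An affine finite automaton (AfA) with `N` states: an initial affine state (entry sum
`1`), an affine operator (each column summing to `1`) for the left end-marker `¢`, for
each input symbol, and for the right end-marker `$`, and a set of accepting states. -/
structure AfA (α : Type) (N : ℕ) where
  init : Fin N → ℝ
  init_sum : ∑ i, init i = 1
  opL : Matrix (Fin N) (Fin N) ℝ
  op : α → Matrix (Fin N) (Fin N) ℝ
  opR : Matrix (Fin N) (Fin N) ℝ
  opL_affine : ∀ j, ∑ i, opL i j = 1
  op_affine : ∀ a j, ∑ i, op a i j = 1
  opR_affine : ∀ j, ∑ i, opR i j = 1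
  accept : Finset (Fin N)

/-- The final state of the AfA on input `x`: the initial state multiplied by the
operators of `¢`, the input symbols, and `$`, in order. -/
noncomputable def AfA.final {α : Type} {N : ℕ} (M : AfA α N) (x : List α) : Fin N → ℝ :=
  M.opR *ᵥ x.foldl (fun v a => M.op a *ᵥ v) (M.opL *ᵥ M.init)

/-- The acceptance probability of the AfA on input `x`: the sum of the absolute values
of the final-state entries at accepting states, divided by the ℓ₁-norm of the final
state. -/
noncomputable def AfA.prob {α : Type} {N : ℕ} (M : AfA α N) (x : List α) : ℝ :=
  (∑ i ∈ M.accept, |M.final x i|) / (∑ i, |M.final x i|)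

/-! Read the NFA as 0/1 transition matrices acting on column vectors: after the input `x`, the
coordinate `j` of the state counts the computation paths from the start state to `j`. One extra
coordinate absorbs the defect of the column sums, so every operator becomes affine and the entries
of the state keep summing to `1`. The right end-marker sends the number `c` of accepting paths to
the extra coordinate, the only accepting one, and `1 - c` to another coordinate; the final state is
therefore a unit vector, accepting when `c = 1` and rejecting when `c = 0`. -/

open Finset

theorem Nat.card_subtype_and_mem_eq_sum {β γ : Type*} [Finite β] (p : β → Prop) (f : β → γ)
    (t : Finset γ) :
    Nat.card {b // p b ∧ f b ∈ t} = ∑ k ∈ t, Nat.card {b // p b ∧ f b = k} := by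
  rw [← sum_coe_sort, ← Nat.card_sigma]
  exact Nat.card_congr
    { toFun b := ⟨⟨f b, b.2.2⟩, b.1, b.2.1, rfl⟩
      invFun b := ⟨b.2.1, b.2.2.1, by simp [b.2.2.2]⟩
      left_inv _ := rfl
      right_inv := by
        rintro ⟨⟨k, hk⟩, b, hb, hbk⟩
        obtain rfl : f b = k := hbk
        rfl }

section AffineOperators

variable {ι R : Type*} [Fintype ι]

theorem sum_mulVec_of_sum_col_eq_one [Semiring R] {A : Matrix ι ι R}
    (hA : ∀ j, ∑ i, A i j = 1) (v : ι → R) : ∑ i, (A *ᵥ v) i = ∑ i, v i := by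
  have h1A : 1 ᵥ* A = 1 := funext fun j => by simp [vecMul, dotProduct, hA]
  rw [← one_dotProduct, dotProduct_mulVec, h1A, one_dotProduct]

theorem sum_foldl_mulVec_of_sum_col_eq_one {α : Type*} [Semiring R]
    {A : α → Matrix ι ι R} (hA : ∀ a j, ∑ i, A a i j = 1) (x : List α) (v : ι → R) :
    ∑ i, x.foldl (fun v a => A a *ᵥ v) v i = ∑ i, v i := by
  induction x generalizing v with
  | nil => rfl
  | cons a x ih => rw [List.foldl_cons, ih, sum_mulVec_of_sum_col_eq_one (hA a)]

variable [Ring R] [DecidableEq ι]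

def readout (w : ι → R) (a r : ι) : Matrix ι ι R :=
  of fun i j => (Pi.single a (w j) : ι → R) i + (Pi.single r (1 - w j) : ι → R) i

theorem sum_readout_col (w : ι → R) (a r j : ι) :
    ∑ i, readout w a r i j = 1 := by
  simp [readout, sum_add_distrib]

theorem readout_mulVec (w : ι → R) (a r : ι) (u : ι → R) :
    readout w a r *ᵥ u = Pi.single a (w ⬝ᵥ u) + Pi.single r (∑ i, u i - w ⬝ᵥ u) := by
  ext i
  simp only [readout, mulVec, dotProduct, of_apply, Pi.add_apply, Pi.single_apply]
  split_ifs <;> simp [sub_mul]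

end AffineOperators

section AffineExtension

variable {n : ℕ} {R : Type*} [Ring R]

def affineExtend (A : Matrix (Fin n) (Fin n) R) : Matrix (Fin (n + 1)) (Fin (n + 1)) R :=
  of fun i j => Fin.lastCases ((Pi.single (Fin.last n) 1 : Fin (n + 1) → R) i)
    (fun j => Fin.lastCases (1 - ∑ k, A k j) (fun i => A i j) i) j

theorem sum_affineExtend_col (A : Matrix (Fin n) (Fin n) R) (j : Fin (n + 1)) :
    ∑ i, affineExtend A i j = 1 := by
  induction j using Fin.lastCases <;> simp [affineExtend, Fin.sum_univ_castSucc]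

theorem affineExtend_mulVec_castSucc (A : Matrix (Fin n) (Fin n) R) (v : Fin (n + 1) → R)
    (i : Fin n) : (affineExtend A *ᵥ v) i.castSucc = (A *ᵥ (v ∘ Fin.castSucc)) i := by
  simp [affineExtend, mulVec, dotProduct, Fin.sum_univ_castSucc]

theorem foldl_affineExtend_mulVec_castSucc {α : Type*} (A : α → Matrix (Fin n) (Fin n) R)
    (x : List α) (v : Fin (n + 1) → R) (i : Fin n) :
    x.foldl (fun v a => affineExtend (A a) *ᵥ v) v i.castSucc =
      x.foldl (fun v a => A a *ᵥ v) (v ∘ Fin.castSucc) i := by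
  induction x generalizing v with
  | nil => rfl
  | cons a x ih =>
    have hstep : (affineExtend (A a) *ᵥ v) ∘ Fin.castSucc = A a *ᵥ (v ∘ Fin.castSucc) :=
      funext (affineExtend_mulVec_castSucc (A a) v)
    rw [List.foldl_cons, ih, List.foldl_cons, hstep]

end AffineExtension

namespace AfA

variable {α : Type} {N : ℕ}

theorem prob_eq_one_of_final_eq_single {M : AfA α N} {x : List α} {a : Fin N} {c : ℝ}
    (hx : M.final x = Pi.single a c) (ha : a ∈ M.accept) (hc : c ≠ 0) : M.prob x = 1 := by
  simp [prob, hx, Pi.single_apply, apply_ite, ha, hc]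

theorem prob_eq_zero_of_final_eq_single {M : AfA α N} {x : List α} {r : Fin N} {c : ℝ}
    (hx : M.final x = Pi.single r c) (hr : r ∉ M.accept) : M.prob x = 0 := by
  simp [prob, hx, Pi.single_apply, apply_ite, hr]

end AfA

section PathCount

variable {α : Type} {n : ℕ}

noncomputable def pathCount (δ : Fin n → α → Finset (Fin n)) (s : Fin n) (x : List α)
    (j : Fin n) : ℕ :=
  Nat.card {q : Fin (x.length + 1) → Fin n // q 0 = s ∧ IsPath δ x q ∧ q (Fin.last x.length) = j}

theorem pathCount_nil (δ : Fin n → α → Finset (Fin n)) (s j : Fin n) :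
    pathCount δ s [] j = if s = j then 1 else 0 := by
  split_ifs with h
  · subst h
    refine Nat.card_eq_one_iff_exists.2 ⟨⟨fun _ => s, rfl, fun r => r.elim0, rfl⟩, ?_⟩
    rintro ⟨q, hq, -, -⟩
    exact Subtype.ext (funext fun m => (congrArg q (Subsingleton.elim (α := Fin 1) m 0)).trans hq)
  · exact @Nat.card_of_isEmpty _ ⟨fun ⟨q, hs, _, hj⟩ => h (hs.symm.trans hj)⟩

def pathConsEquiv (δ : Fin n → α → Finset (Fin n)) (s : Fin n) (a : α) (x : List α)
    (j : Fin n) :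
    {q : Fin ((a :: x).length + 1) → Fin n //
      q 0 = s ∧ IsPath δ (a :: x) q ∧ q (Fin.last (a :: x).length) = j} ≃
    Σ i : δ s a, {q : Fin (x.length + 1) → Fin n //
      q 0 = i ∧ IsPath δ x q ∧ q (Fin.last x.length) = j} where
  toFun q := ⟨⟨q.1 1, by simpa [q.2.1] using q.2.2.1 0⟩,
    ⟨Fin.tail q.1, rfl, fun r => q.2.2.1 r.succ, q.2.2.2⟩⟩
  invFun p := ⟨Fin.cons s p.2.1, rfl, by
    refine Fin.cases ?_ fun r => ?_
    · simp [p.2.2.1]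
    · simpa using p.2.2.2.1 r, p.2.2.2.2⟩
  left_inv q := Subtype.ext <| by simp [← q.2.1]
  right_inv := by
    rintro ⟨⟨i, hi⟩, q, hq, -, -⟩
    obtain rfl : q 0 = i := hq
    rfl

theorem pathCount_cons (δ : Fin n → α → Finset (Fin n)) (s : Fin n) (a : α) (x : List α)
    (j : Fin n) : pathCount δ s (a :: x) j = ∑ i ∈ δ s a, pathCount δ i x j := by
  rw [pathCount, Nat.card_congr (pathConsEquiv δ s a x j), Nat.card_sigma]
  exact sum_coe_sort (δ s a) (fun i => pathCount δ i x j)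

end PathCount

section TransitionMatrix

variable {α : Type} {n : ℕ} {R : Type*} [Semiring R]

def transMatrix (δ : Fin n → α → Finset (Fin n)) (a : α) : Matrix (Fin n) (Fin n) R :=
  of fun i j => if i ∈ δ j a then 1 else 0

theorem foldl_transMatrix_mulVec_apply (δ : Fin n → α → Finset (Fin n)) (x : List α)
    (v : Fin n → R) (j : Fin n) :
    x.foldl (fun v a => transMatrix δ a *ᵥ v) v j = ∑ s, v s * pathCount δ s x j := by
  induction x generalizing v with
  | nil => simp [pathCount_nil]
  | cons a x ih =>
    rw [List.foldl_cons, ih]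
    simp only [pathCount_cons, Nat.cast_sum, mul_sum, mulVec, dotProduct, transMatrix, of_apply,
      sum_mul, ite_mul, one_mul, zero_mul]
    rw [sum_comm]
    simp [sum_ite_mem]

end TransitionMatrix

namespace NFAb

variable {α : Type} {n : ℕ}

theorem accPathCount_eq_sum_pathCount (N : NFAb α n) (x : List α) :
    N.accPathCount x = ∑ k ∈ N.accept, pathCount N.δ N.start x k := by
  simp only [accPathCount, pathCount, ← and_assoc]
  exact Nat.card_subtype_and_mem_eq_sum _ _ _

theorem accPathCount_eq_zero_of_not_accepts {N : NFAb α n} {x : List α}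
    (hx : ¬N.Accepts x) : N.accPathCount x = 0 :=
  @Nat.card_of_isEmpty _ ⟨fun q => hx ⟨q.1, q.2⟩⟩

noncomputable def toAfA (N : NFAb α n) : AfA α (n + 1) where
  init := Pi.single N.start.castSucc 1
  init_sum := by simp
  opL := 1
  op a := affineExtend (transMatrix N.δ a)
  opR := readout (Fin.lastCases 0 fun k => if k ∈ N.accept then 1 else 0) (Fin.last n)
    N.start.castSucc
  opL_affine j := by simp [one_apply]
  op_affine a := sum_affineExtend_col _
  opR_affine := sum_readout_col _ _ _
  accept := {Fin.last n}

theorem toAfA_final (N : NFAb α n) (x : List α) :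
    N.toAfA.final x = Pi.single (Fin.last n) (N.accPathCount x : ℝ) +
      Pi.single N.start.castSucc (1 - (N.accPathCount x : ℝ)) := by
  set u := x.foldl (fun v a => N.toAfA.op a *ᵥ v) (N.toAfA.opL *ᵥ N.toAfA.init)
  have hu_castSucc (k : Fin n) : u k.castSucc = pathCount N.δ N.start x k := by
    simp only [u, toAfA, one_mulVec]
    rw [foldl_affineExtend_mulVec_castSucc, foldl_transMatrix_mulVec_apply]
    simp [Pi.single_apply, Fin.castSucc_inj]
  have hu_sum : ∑ i, u i = 1 := by
    rw [sum_foldl_mulVec_of_sum_col_eq_one N.toAfA.op_affine,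
      sum_mulVec_of_sum_col_eq_one N.toAfA.opL_affine, N.toAfA.init_sum]
  have hw : (Fin.lastCases 0 fun k => if k ∈ N.accept then 1 else 0 : Fin (n + 1) → ℝ) ⬝ᵥ u =
      N.accPathCount x := by
    simp [dotProduct, Fin.sum_univ_castSucc, hu_castSucc, accPathCount_eq_sum_pathCount]
  change readout _ _ _ *ᵥ u = _
  rw [readout_mulVec, hw, hu_sum]

end NFAb

theorem nfa_single_path_to_afa_zero_error_general {α : Type} (L : Set (List α)) (n : ℕ)
    (N : NFAb α n) (hrec : ∀ x, x ∈ L ↔ N.Accepts x)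
    (hone : ∀ x ∈ L, N.accPathCount x = 1) :
    ∃ M : AfA α (n + 1),
      (∀ x ∈ L, M.prob x = 1) ∧ (∀ x ∉ L, M.prob x = 0) := by
  refine ⟨N.toAfA, fun x hx => ?_, fun x hx => ?_⟩
  · have hfinal : N.toAfA.final x = Pi.single (Fin.last n) 1 := by
      simp [NFAb.toAfA_final, hone x hx]
    exact AfA.prob_eq_one_of_final_eq_single hfinal (mem_singleton_self _) one_ne_zero
  · have hcount := NFAb.accPathCount_eq_zero_of_not_accepts (mt (hrec x).2 hx)
    have hfinal : N.toAfA.final x = Pi.single N.start.castSucc 1 := by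
      simp [NFAb.toAfA_final, hcount]
    exact AfA.prob_eq_zero_of_final_eq_single hfinal (by simp [NFAb.toAfA, Fin.castSucc_ne_last])

/-- If `L` is recognized by an `n`-state NFA with `n > 1` that accepts every member of
`L` on exactly one nondeterministic computation path, then `L` is recognized by an
`(n+1)`-state AfA with zero error: every member is accepted with probability `1` and
every non-member with probability `0`. -/
theorem nfa_single_path_to_afa_zero_error {α : Type} (L : Set (List α)) (n : ℕ)
    (hn : 1 < n) (N : NFAb α n) (hrec : ∀ x, x ∈ L ↔ N.Accepts x)
    (hone : ∀ x ∈ L, N.accPathCount x = 1) :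
    ∃ M : AfA α (n + 1),
      (∀ x ∈ L, M.prob x = 1) ∧ (∀ x ∉ L, M.prob x = 0) :=
  nfa_single_path_to_afa_zero_error_general L n N hrec hone
end
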